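/- Let g = [[a,b],[c,d]] ∈ SL(2,ℝ) with a + d > 2 and c ≠ 0, and set λ± = ((a+d) ± √((a+d)² − 4))/2, w_a = (λ₊ − d)/c and w_r = (λ₋ − d)/c. Then for every point z of the upper half-plane ℍ = {z ∈ ℂ : Im z > 0}, the sequence gⁿ • z converges to w_a in ℂ and the sequence g⁻ⁿ • z converges to w_r in ℂ as n → ∞, where SL(2,ℝ) acts on ℍ by fractional linear transformations [[a,b],[c,d]] • z = (az+b)/(cz+d). -/

import Mathlib

noncomputable section

abbrev SL2 := Matrix.SpecialLinearGroup (Fin 2) ℝ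

/-- Trace of an element of `SL(2,ℝ)`. -/
def trc (g : SL2) : ℝ := g.1 0 0 + g.1 1 1

/-- `λ₊(g) = (tr g + √((tr g)² − 4))/2`. -/
def lamP (g : SL2) : ℝ := (trc g + Real.sqrt ((trc g) ^ 2 - 4)) / 2

/-- `λ₋(g) = (tr g − √((tr g)² − 4))/2`. -/
def lamM (g : SL2) : ℝ := (trc g - Real.sqrt ((trc g) ^ 2 - 4)) / 2

/-- Attracting fixed point `w_a(g) = (λ₊(g) − d)/c` of a hyperbolic `g` with `c ≠ 0`. -/
def wA (g : SL2) : ℝ := (lamP g - g.1 1 1) / g.1 1 0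

/-- Repelling fixed point `w_r(g) = (λ₋(g) − d)/c` of a hyperbolic `g` with `c ≠ 0`. -/
def wR (g : SL2) : ℝ := (lamM g - g.1 1 1) / g.1 1 0

/-!
By Cayley–Hamilton `g² = (λ₊ + λ₋) g − λ₊λ₋`, so `gⁿ` is a combination of `g` and `1` whose
coefficients are explicit in `λ₊ⁿ, λ₋ⁿ`. As `0 < λ₋ < λ₊`, the rescaled powers `λ₊⁻ⁿ gⁿ` converge
to the rank-one matrix `(g − λ₋)/(λ₊ − λ₋)`, both of whose columns are proportional to `(w_a, 1)`.
The fractional linear map of a real matrix is invariant under scaling and continuous in the matrix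
wherever `cz + d ≠ 0`, which holds on `ℍ` once `c ≠ 0`; hence `gⁿ • z → w_a`. For `g⁻¹`, which has
the same trace, `w_a(g⁻¹) = w_r(g)`.
-/

open Filter Topology

theorem pow_eq_smul_add_smul_one_of_mul_self_eq {K A : Type*} [Field K] [Ring A] [Algebra K A]
    {x : A} {p q : K} (hpq : p ≠ q) (hx : x * x = (p + q) • x - (p * q) • 1) (n : ℕ) :
    x ^ n = ((p ^ n - q ^ n) / (p - q)) • x + ((q ^ n * p - p ^ n * q) / (p - q)) • 1 := by
  have hpq' : p - q ≠ 0 := sub_ne_zero.mpr hpq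
  induction n with
  | zero => simp [div_self hpq']
  | succ n ih =>
    rw [pow_succ, ih, add_mul, smul_mul_assoc, hx, smul_mul_assoc, one_mul]
    match_scalars <;> field_simp <;> ring

theorem tendsto_inv_pow_smul_pow_of_mul_self_eq {K A : Type*} [NormedField K] [Ring A]
    [Algebra K A] [TopologicalSpace A] [ContinuousAdd A] [ContinuousSMul K A]
    {x : A} {p q : K} (hqp : ‖q‖ < ‖p‖) (hx : x * x = (p + q) • x - (p * q) • 1) :
    Tendsto (fun n : ℕ ↦ (p ^ n)⁻¹ • x ^ n) atTop (𝓝 ((p - q)⁻¹ • (x - q • 1))) := by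
  have hp : p ≠ 0 := norm_pos_iff.mp ((norm_nonneg q).trans_lt hqp)
  have hpq : p - q ≠ 0 := sub_ne_zero.mpr fun h ↦ hqp.ne (by rw [h])
  have hratio : Tendsto (fun n : ℕ ↦ (q / p) ^ n) atTop (𝓝 0) :=
    tendsto_pow_atTop_nhds_zero_of_norm_lt_one
      (by rwa [norm_div, div_lt_one (norm_pos_iff.mpr hp)])
  have hrescaled : ∀ n : ℕ, (p ^ n)⁻¹ • x ^ n
      = ((1 - (q / p) ^ n) / (p - q)) • x + (((q / p) ^ n * p - q) / (p - q)) • 1 := by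
    intro n
    rw [pow_eq_smul_add_smul_one_of_mul_self_eq (sub_ne_zero.mp hpq) hx, smul_add, smul_smul,
      smul_smul, div_pow]
    match_scalars <;> field_simp
  have hlimit : (p - q)⁻¹ • (x - q • 1)
      = ((1 - 0) / (p - q)) • x + ((0 * p - q) / (p - q)) • (1 : A) := by
    rw [smul_sub, smul_smul]
    match_scalars <;> ring
  simp_rw [hrescaled, hlimit]
  exact (((tendsto_const_nhds.sub hratio).div_const _).smul_const _).add
    ((((hratio.mul_const p).sub_const q).div_const _).smul_const _)

/-- Defined for every real matrix, not only on `GL(2, ℝ)`: the limit of the rescaled powers of `g`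
is singular. -/
def moebius (m : Matrix (Fin 2) (Fin 2) ℝ) (z : ℂ) : ℂ :=
  (m 0 0 * z + m 0 1) / (m 1 0 * z + m 1 1)

theorem moebius_smul (m : Matrix (Fin 2) (Fin 2) ℝ) (z : ℂ) {r : ℝ} (hr : r ≠ 0) :
    moebius (r • m) z = moebius m z := by
  simp only [moebius, Matrix.smul_apply, smul_eq_mul, Complex.ofReal_mul]
  rw [mul_assoc, mul_assoc, ← mul_add, ← mul_add, mul_div_mul_left _ _ (by exact_mod_cast hr)]

theorem continuousAt_moebius (m : Matrix (Fin 2) (Fin 2) ℝ) (z : ℂ)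
    (h : (m 1 0 * z + m 1 1 : ℂ) ≠ 0) : ContinuousAt (fun m ↦ moebius m z) m := by
  unfold moebius
  fun_prop (disch := exact h)

namespace SL2

variable (g : SL2)

theorem coe_smul_eq_moebius (z : UpperHalfPlane) :
    ((g • z : UpperHalfPlane) : ℂ) = moebius g.1 z :=
  UpperHalfPlane.coe_specialLinearGroup_apply g z

theorem lamP_add_lamM : lamP g + lamM g = trc g := by
  unfold lamP lamM
  ring

theorem lamP_mul_lamM (h : 4 ≤ trc g ^ 2) : lamP g * lamM g = 1 := by
  have hsq := Real.sq_sqrt (sub_nonneg.mpr h)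
  unfold lamP lamM
  linear_combination (-1 / 4 : ℝ) * hsq

theorem abs_lamM_lt_abs_lamP (h : 2 < trc g) : |lamM g| < |lamP g| := by
  have hprod := lamP_mul_lamM g (by nlinarith)
  have hsum := lamP_add_lamM g
  have hlt : lamM g < lamP g := by
    have : 0 < Real.sqrt (trc g ^ 2 - 4) := Real.sqrt_pos.mpr (by nlinarith)
    unfold lamP lamM
    linarith
  have hM : 0 < lamM g := by nlinarith
  rwa [abs_of_pos hM, abs_of_pos (hM.trans hlt)]

theorem mul_self_eq_trc_smul_sub_one : g.1 * g.1 = trc g • g.1 - 1 := by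
  have hCH := Matrix.aeval_self_charpoly g.1
  simp only [Matrix.charpoly_fin_two, map_add, map_sub, map_mul, map_pow, Polynomial.aeval_X,
    Polynomial.aeval_C, Matrix.SpecialLinearGroup.det_coe, map_one, Matrix.trace_fin_two] at hCH
  rw [← map_add, ← Algebra.smul_def] at hCH
  rw [← sub_eq_zero, ← hCH, trc, sq]
  abel

theorem mul_self_eq (h : 4 ≤ trc g ^ 2) :
    g.1 * g.1 = (lamP g + lamM g) • g.1 - (lamP g * lamM g) • 1 := by
  rw [lamP_add_lamM, lamP_mul_lamM g h, one_smul, mul_self_eq_trc_smul_sub_one]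

theorem moebius_sub_lamM_smul_one (h : 4 ≤ trc g ^ 2) (hc : g.1 1 0 ≠ 0)
    (z : UpperHalfPlane) : moebius (g.1 - lamM g • 1) z = wA g := by
  have hden : (g.1 1 0 * z + (g.1 1 1 - lamM g) : ℂ) ≠ 0 := by
    simpa using UpperHalfPlane.linear_ne_zero (cd := ![g.1 1 0, g.1 1 1 - lamM g]) z
      (by simp [hc])
  have hdet := Matrix.SpecialLinearGroup.det_coe g
  rw [Matrix.det_fin_two] at hdet
  have hsum := lamP_add_lamM g
  have hprod := lamP_mul_lamM g h
  unfold trc at hsum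
  have hcol₀ : (g.1 0 0 - lamM g : ℂ) = wA g * g.1 1 0 := by
    rw [wA, Complex.ofReal_div, div_mul_cancel₀ _ (by exact_mod_cast hc)]
    exact_mod_cast (by linarith : g.1 0 0 - lamM g = lamP g - g.1 1 1)
  have hcol₁ : (g.1 0 1 : ℂ) = wA g * (g.1 1 1 - lamM g) := by
    rw [wA, Complex.ofReal_div, div_mul_eq_mul_div, eq_div_iff (by exact_mod_cast hc)]
    exact_mod_cast (by linear_combination (-g.1 1 1) * hsum + hprod - hdet :
      g.1 0 1 * g.1 1 0 = (lamP g - g.1 1 1) * (g.1 1 1 - lamM g))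
  simp only [moebius, Matrix.sub_apply, Matrix.smul_apply, Matrix.one_apply_eq,
    Matrix.one_apply_ne one_ne_zero, Matrix.one_apply_ne zero_ne_one, smul_eq_mul, mul_one,
    mul_zero, sub_zero]
  rw [div_eq_iff (by push_cast; exact hden)]
  push_cast
  linear_combination (z : ℂ) * hcol₀ + hcol₁

theorem tendsto_coe_pow_smul_wA (htr : 2 < trc g) (hc : g.1 1 0 ≠ 0) (z : UpperHalfPlane) :
    Tendsto (fun n : ℕ ↦ ((g ^ n • z : UpperHalfPlane) : ℂ)) atTop (𝓝 (wA g)) := by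
  have h4 : 4 ≤ trc g ^ 2 := by nlinarith
  have habs := abs_lamM_lt_abs_lamP g htr
  have hP : lamP g ≠ 0 := abs_pos.mp ((abs_nonneg _).trans_lt habs)
  have hPM : lamP g - lamM g ≠ 0 := sub_ne_zero.mpr fun h ↦ habs.ne (by rw [h])
  have hlim := tendsto_inv_pow_smul_pow_of_mul_self_eq habs (mul_self_eq g h4)
  set L := (lamP g - lamM g)⁻¹ • (g.1 - lamM g • 1) with hL
  have hden : (L 1 0 * z + L 1 1 : ℂ) ≠ 0 :=
    UpperHalfPlane.linear_ne_zero (cd := L 1) z fun h ↦ by simpa [hL, hPM, hc] using congrFun h 0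
  have hval : moebius L z = wA g := by
    rw [hL, moebius_smul _ _ (inv_ne_zero hPM), moebius_sub_lamM_smul_one g h4 hc]
  rw [← hval]
  refine ((continuousAt_moebius L z hden).tendsto.comp hlim).congr fun n ↦ ?_
  rw [Function.comp_apply, moebius_smul _ _ (inv_ne_zero (pow_ne_zero n hP)),
    coe_smul_eq_moebius, Matrix.SpecialLinearGroup.coe_pow]

theorem trc_inv : trc g⁻¹ = trc g := by
  simp [trc, Matrix.SpecialLinearGroup.SL2_inv_expl, add_comm]

theorem inv_apply_one_zero : g⁻¹.1 1 0 = -g.1 1 0 := by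
  simp [Matrix.SpecialLinearGroup.SL2_inv_expl]

theorem inv_apply_one_one : g⁻¹.1 1 1 = g.1 0 0 := by
  simp [Matrix.SpecialLinearGroup.SL2_inv_expl]

theorem wA_inv : wA g⁻¹ = wR g := by
  have hsum := lamP_add_lamM g
  unfold trc at hsum
  rw [wA, wR, lamP, trc_inv, ← lamP, inv_apply_one_one, inv_apply_one_zero, div_neg, ← neg_div]
  congr 1
  linarith

end SL2

/-- for hyperbolic `g ∈ SL(2,ℝ)` with `tr g > 2` and nonzero lower-left
entry, and any `z ∈ ℍ`, the sequence `gⁿ • z` converges to `w_a(g)` in `ℂ` and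
`g⁻ⁿ • z` converges to `w_r(g)` in `ℂ` as `n → ∞`. -/
theorem stmt_4 (g : SL2) (htr : trc g > 2) (hc : g.1 1 0 ≠ 0) (z : UpperHalfPlane) :
    Filter.Tendsto (fun n : ℕ => ((g ^ n • z : UpperHalfPlane) : ℂ))
      Filter.atTop (nhds ((wA g : ℝ) : ℂ)) ∧
    Filter.Tendsto (fun n : ℕ => ((g⁻¹ ^ n • z : UpperHalfPlane) : ℂ))
      Filter.atTop (nhds ((wR g : ℝ) : ℂ)) := by
  refine ⟨SL2.tendsto_coe_pow_smul_wA g htr hc z, ?_⟩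
  rw [← SL2.wA_inv]
  refine SL2.tendsto_coe_pow_smul_wA g⁻¹ (by rwa [SL2.trc_inv]) ?_ z
  rwa [SL2.inv_apply_one_zero, neg_ne_zero]

end
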